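/- Let π_C(x,a) = a^x e^{−a}/x! be the Poisson distribution and π_K(z,y,a) = C(y,z)a^z(1−a)^{y−z} the binomial distribution. For 0 < a < 1 and b > 0, the matrix K(x,y) = ∑_{z=0}^{min(x,y)} π_C(x−z, b) π_K(z, y, a) on ℤ≥0 × ℤ≥0 is column-stochastic (∑_{x≥0} K(x,y) = 1 for each y) and satisfies detailed balance with respect to the Poisson distribution π_C(·, p') where p' = b/(1−a): K(x,y)π_C(y,p') = K(y,x)π_C(x,p') for all x,y ∈ ℤ≥0. -/

import Mathlib

open Finset

/-- Poisson distribution on `ℤ≥0`. -/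
noncomputable def piC (x : ℕ) (a : ℝ) : ℝ := a ^ x * Real.exp (-a) / (Nat.factorial x)

/-- Binomial distribution, zero for `z > y`. -/
noncomputable def piK (z y : ℕ) (a : ℝ) : ℝ := (y.choose z : ℝ) * a ^ z * (1 - a) ^ (y - z)

lemma piC_summable (b : ℝ) : Summable (fun n : ℕ => piC n b) := by
  have : (fun n : ℕ => piC n b) = fun n : ℕ => Real.exp (-b) * (b ^ n / n.factorial) := by
    funext n; simp [piC]; ring
  rw [this]
  exact (Real.summable_pow_div_factorial b).mul_left _

lemma piC_tsum (b : ℝ) : ∑' n : ℕ, piC n b = 1 := by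
  have : (fun n : ℕ => piC n b) = fun n : ℕ => Real.exp (-b) * (b ^ n / n.factorial) := by
    funext n; simp [piC]; ring
  rw [this, tsum_mul_left]
  have : ∑' n : ℕ, (b : ℝ) ^ n / n.factorial = Real.exp b := by
    rw [Real.exp_eq_exp_ℝ, NormedSpace.exp_eq_tsum_div]
  rw [this, ← Real.exp_add]
  simp

lemma shift_summable_piC (b : ℝ) (z : ℕ) :
    Summable (fun x : ℕ => if z ≤ x then piC (x - z) b else 0) := by
  set f : ℕ → ℝ := fun x => if z ≤ x then piC (x - z) b else 0 with hf
  have hinj : Function.Injective (fun n : ℕ => n + z) := add_left_injective z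
  have hzero : ∀ x ∉ Set.range (fun n : ℕ => n + z), f x = 0 := by
    intro x hx
    simp only [Set.mem_range, not_exists] at hx
    have : ¬ z ≤ x := fun h => hx (x - z) (by omega)
    simp [hf, this]
  rw [← hinj.summable_iff hzero]
  have : f ∘ (fun n : ℕ => n + z) = fun n => piC n b := by
    funext n; simp [hf]
  rw [this]
  exact piC_summable b

lemma shift_tsum_piC (b : ℝ) (z : ℕ) :
    ∑' x : ℕ, (if z ≤ x then piC (x - z) b else 0) = 1 := by
  set f : ℕ → ℝ := fun x => if z ≤ x then piC (x - z) b else 0 with hf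
  have hinj : Function.Injective (fun n : ℕ => n + z) := add_left_injective z
  have hzero : ∀ x ∉ Set.range (fun n : ℕ => n + z), f x = 0 := by
    intro x hx
    simp only [Set.mem_range, not_exists] at hx
    have : ¬ z ≤ x := fun h => hx (x - z) (by omega)
    simp [hf, this]
  have hsupp : Function.support f ⊆ Set.range (fun n : ℕ => n + z) :=
    Function.support_subset_iff'.2 hzero
  rw [← hinj.tsum_eq hsupp]
  have : (fun n : ℕ => f (n + z)) = fun n => piC n b := by
    funext n; simp [hf]
  rw [show ∑' (c : ℕ), f ((fun n => n + z) c) = ∑' n : ℕ, piC n b from tsum_congr (fun n => by simp [hf]), piC_tsum]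

theorem charlier_type_i_convolution (a b : ℝ) (ha : 0 < a) (ha1 : a < 1) (hb : 0 < b)
    (p' : ℝ) (hp' : p' = b / (1 - a))
    (K : ℕ → ℕ → ℝ)
    (hK : ∀ x y, K x y = ∑ z ∈ Finset.range (min x y + 1), piC (x - z) b * piK z y a) :
    (∀ y, ∑' x : ℕ, K x y = 1) ∧
      (∀ x y, K x y * piC y p' = K y x * piC x p') := by
  have h1a : (0:ℝ) < 1 - a := by linarith
  constructor
  · -- column stochastic
    intro y
    have hK' : ∀ x, K x y = ∑ z ∈ Finset.range (y + 1),
        (if z ≤ x then piC (x - z) b else 0) * piK z y a := by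
      intro x
      have hsub : Finset.range (min x y + 1) ⊆ Finset.range (y + 1) :=
        Finset.range_subset_range.2 (by omega)
      have e1 : ∑ z ∈ Finset.range (min x y + 1), piC (x - z) b * piK z y a
          = ∑ z ∈ Finset.range (min x y + 1),
              (if z ≤ x then piC (x - z) b else 0) * piK z y a := by
        apply Finset.sum_congr rfl
        intro z hz
        have hzx : z ≤ x :=
          le_trans (Nat.lt_succ_iff.mp (Finset.mem_range.1 hz)) (min_le_left _ _)
        rw [if_pos hzx]
      rw [hK x y, e1]
      apply Finset.sum_subset hsub
      intro z hz hz'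
      have : ¬ z ≤ x := fun h => hz' (Finset.mem_range.2 (Nat.lt_succ_iff.2
        (le_min h (Nat.lt_succ_iff.mp (Finset.mem_range.1 hz)))))
      rw [if_neg this, zero_mul]
    calc ∑' x : ℕ, K x y
        = ∑' x : ℕ, ∑ z ∈ Finset.range (y + 1),
            (if z ≤ x then piC (x - z) b else 0) * piK z y a := tsum_congr hK'
      _ = ∑ z ∈ Finset.range (y + 1),
            ∑' x : ℕ, (if z ≤ x then piC (x - z) b else 0) * piK z y a := by
          apply Summable.tsum_finsetSum
          intro z _
          exact (shift_summable_piC b z).mul_right _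
      _ = ∑ z ∈ Finset.range (y + 1), piK z y a := by
          apply Finset.sum_congr rfl
          intro z _
          rw [tsum_mul_right, shift_tsum_piC, one_mul]
      _ = ∑ z ∈ Finset.range (y + 1), a ^ z * (1 - a) ^ (y - z) * (y.choose z : ℝ) := by
          apply Finset.sum_congr rfl
          intro z _
          simp only [piK]; ring
      _ = (a + (1 - a)) ^ y := (add_pow a (1 - a) y).symm
      _ = 1 := by norm_num
  · -- detailed balance
    intro x y
    rw [hK x y, hK y x, min_comm y x, Finset.sum_mul, Finset.sum_mul]
    apply Finset.sum_congr rfl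
    intro z hz
    simp only [Finset.mem_range] at hz
    have hzx : z ≤ x := by omega
    have hzy : z ≤ y := by omega
    simp only [piC, piK]
    rw [hp']
    have hxf : ((x - z).factorial : ℝ) ≠ 0 := Nat.cast_ne_zero.2 (Nat.factorial_ne_zero _)
    have hyf : ((y - z).factorial : ℝ) ≠ 0 := Nat.cast_ne_zero.2 (Nat.factorial_ne_zero _)
    have hzf : ((z).factorial : ℝ) ≠ 0 := Nat.cast_ne_zero.2 (Nat.factorial_ne_zero _)
    have hxF : ((x).factorial : ℝ) ≠ 0 := Nat.cast_ne_zero.2 (Nat.factorial_ne_zero _)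
    have hyF : ((y).factorial : ℝ) ≠ 0 := Nat.cast_ne_zero.2 (Nat.factorial_ne_zero _)
    have hbne : b ≠ 0 := ne_of_gt hb
    have h1ane : (1 - a) ≠ 0 := ne_of_gt h1a
    have hcy : (y.choose z : ℝ) = y.factorial / (z.factorial * (y - z).factorial) :=
      Nat.cast_choose ℝ hzy
    have hcx : (x.choose z : ℝ) = x.factorial / (z.factorial * (x - z).factorial) :=
      Nat.cast_choose ℝ hzx
    have hbx : b ^ (x - z) = b ^ x / b ^ z := pow_sub₀ b hbne hzx
    have hby : b ^ (y - z) = b ^ y / b ^ z := pow_sub₀ b hbne hzy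
    have hax : (1 - a) ^ (x - z) = (1 - a) ^ x / (1 - a) ^ z := pow_sub₀ _ h1ane hzx
    have hay : (1 - a) ^ (y - z) = (1 - a) ^ y / (1 - a) ^ z := pow_sub₀ _ h1ane hzy
    rw [hcy, hcx, hbx, hby, hax, hay, div_pow, div_pow]
    have hbz : (b:ℝ) ^ z ≠ 0 := pow_ne_zero _ hbne
    have haz : ((1 - a):ℝ) ^ z ≠ 0 := pow_ne_zero _ h1ane
    have hayy : ((1 - a):ℝ) ^ y ≠ 0 := pow_ne_zero _ h1ane
    have haxx : ((1 - a):ℝ) ^ x ≠ 0 := pow_ne_zero _ h1ane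
    field_simp
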